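/- arXiv:2008.05538 — 2 statements merged into one kernel-verified Lean document; each statement's English description precedes it below -/
import Mathlib

section
/- Let F, f, (θ_F, ρ_f) be as in the GNS-like theorem for *-bimodules. If (θ,ρ) is another *-representation of X on an inner product space D with an algebraically cyclic vector ψ for ρ satisfying f(a) = (ρ(a)ψ, ψ) and F(a·x·b) = (θ(x)ρ(b)ψ, ρ(a⁺)ψ) for all a,b ∈ A, x ∈ X, then there is a unitary U from the Hilbert completion H_f onto that of D with Uφ_f = ψ, U D_f = D, ρ(a) = Uρ_f(a)U⁻¹ and θ(x) = Uθ_F(x)U⁻¹ for all a ∈ A, x ∈ X. -/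
/-!
Both cyclic vectors realise `f` as a vector state, so the families `a ↦ ρf(a)φf` and
`a ↦ ρ(a)ψ`, whose ranges are the dense domains `D₁` and `D₂`, have the same Gram matrix
`(a, b) ↦ f(a⁺b)`. Families with equal Gram matrices satisfy the same linear relations, so
`ρf(a)φf ↦ ρ(a)ψ` is a well-defined isometry between dense subspaces and extends to a unitary
`U`. It intertwines `ρf` with `ρ` because `ρ(a)ρ(b)ψ = ρ(ab)ψ`, and `θf` with `θ` because
both `⟪ρf(c)φf, θf(x)ρf(b)φf⟫` and `⟪ρ(c)ψ, θ(x)ρ(b)ψ⟫` equal `F(c⁺·x·b)`.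
-/

open Finsupp Submodule Matrix

open scoped ComplexInnerProductSpace

section GramRealization

variable {𝕜 ι E F : Type*} [RCLike 𝕜]
  [NormedAddCommGroup E] [InnerProductSpace 𝕜 E] [NormedAddCommGroup F] [InnerProductSpace 𝕜 F]
  {g₁ : ι → E} {g₂ : ι → F}

theorem inner_linearCombination_eq_of_gram_eq (hg : gram 𝕜 g₁ = gram 𝕜 g₂) (c d : ι →₀ 𝕜) :
    inner 𝕜 (linearCombination 𝕜 g₁ c) (linearCombination 𝕜 g₁ d) =
      inner 𝕜 (linearCombination 𝕜 g₂ c) (linearCombination 𝕜 g₂ d) := by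
  have hg' (i j : ι) : inner 𝕜 (g₁ i) (g₁ j) = inner 𝕜 (g₂ i) (g₂ j) := by
    simpa only [gram_apply] using congrFun₂ hg i j
  simp only [linearCombination_apply, Finsupp.sum_inner, Finsupp.inner_sum, inner_smul_left,
    inner_smul_right, hg']

theorem ker_linearCombination_eq_of_gram_eq (hg : gram 𝕜 g₁ = gram 𝕜 g₂) :
    LinearMap.ker (linearCombination 𝕜 g₁) = LinearMap.ker (linearCombination 𝕜 g₂) := by
  ext c
  rw [LinearMap.mem_ker, LinearMap.mem_ker, ← inner_self_eq_zero (𝕜 := 𝕜),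
    inner_linearCombination_eq_of_gram_eq hg, inner_self_eq_zero]

theorem norm_linearCombination_eq_of_gram_eq (hg : gram 𝕜 g₁ = gram 𝕜 g₂) (c : ι →₀ 𝕜) :
    ‖linearCombination 𝕜 g₁ c‖ = ‖linearCombination 𝕜 g₂ c‖ := by
  rw [norm_eq_sqrt_re_inner (𝕜 := 𝕜), norm_eq_sqrt_re_inner (𝕜 := 𝕜),
    inner_linearCombination_eq_of_gram_eq hg]

theorem exists_linearIsometryEquiv_apply_eq_of_gram_eq [CompleteSpace E] [CompleteSpace F]
    (hg : gram 𝕜 g₁ = gram 𝕜 g₂)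
    (h₁ : Dense (span 𝕜 (Set.range g₁) : Set E)) (h₂ : Dense (span 𝕜 (Set.range g₂) : Set F)) :
    ∃ U : E ≃ₗᵢ[𝕜] F, ∀ i, U (g₁ i) = g₂ i := by
  set K := LinearMap.ker (linearCombination 𝕜 g₁)
  -- `g₁` and `g₂` satisfy the same linear relations, so both factor through `(ι →₀ 𝕜) ⧸ K`
  set e₁ := K.liftQ (linearCombination 𝕜 g₁) le_rfl
  set e₂ := K.liftQ (linearCombination 𝕜 g₂) (ker_linearCombination_eq_of_gram_eq hg).le
  have hd₁ : DenseRange e₁ := by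
    rwa [DenseRange, ← LinearMap.coe_range, range_liftQ, range_linearCombination]
  have hd₂ : DenseRange e₂ := by
    rwa [DenseRange, ← LinearMap.coe_range, range_liftQ, range_linearCombination]
  have hnorm (q : (ι →₀ 𝕜) ⧸ K) : ‖e₂ (LinearEquiv.refl 𝕜 _ q)‖ = ‖e₁ q‖ := by
    induction q using Submodule.Quotient.induction_on with
    | H c => exact (norm_linearCombination_eq_of_gram_eq hg c).symm
  refine ⟨(LinearEquiv.refl 𝕜 _).extendOfIsometry e₁ e₂ hd₁ hd₂ hnorm, fun i => ?_⟩
  simpa [e₁, e₂] using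
    (LinearEquiv.refl 𝕜 _).extendOfIsometry_eq e₁ e₂ hd₁ hd₂ hnorm (K.mkQ (single i 1))

theorem LinearIsometryEquiv.apply_eq_of_inner_eq (U : E ≃ₗᵢ[𝕜] F) (hU : ∀ i, U (g₁ i) = g₂ i)
    (h₂ : DenseRange g₂) {v : E} {w : F} (h : ∀ i, inner 𝕜 (g₁ i) v = inner 𝕜 (g₂ i) w) :
    U v = w :=
  h₂.eq_of_inner_right 𝕜 fun i => by rw [← hU, U.inner_map_map, h, hU]

end GramRealization

theorem inner_apply_apply_eq_inner_mul {A H : Type*} [Mul A] [InvolutiveStar A]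
    [NormedAddCommGroup H] [InnerProductSpace ℂ H] {D : Submodule ℂ H} {ρ : A → (D →ₗ[ℂ] D)}
    (hρ_mul : ∀ a b : A, ρ (a * b) = (ρ a) ∘ₗ (ρ b))
    (hρ_adj : ∀ (a : A) (ξ η : D), ⟪(η : H), (ρ a ξ : H)⟫ = ⟪(ρ (star a) η : H), (ξ : H)⟫)
    (ψ : D) (a b : A) : ⟪(ρ a ψ : H), ρ b ψ⟫ = ⟪(ψ : H), ρ (star a * b) ψ⟫ := by
  rw [hρ_mul, LinearMap.comp_apply, hρ_adj (star a), star_star]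

theorem gns_like_uniqueness_general
    {A X : Type*} [Ring A] [Algebra ℂ A] [StarRing A]
    [AddCommGroup X] [Module ℂ X]
    (l : A → X → X) (r : X → A → X)
    (F : X →ₗ[ℂ] ℂ)
    (f : A →ₗ[ℂ] ℂ)
    -- the GNS-like representation (θf, ρf) on D₁ ⊆ H₁ with cyclic vector φf
    {H₁ : Type*} [NormedAddCommGroup H₁] [InnerProductSpace ℂ H₁] [CompleteSpace H₁]
    (D₁ : Submodule ℂ H₁) (hD₁ : Dense (D₁ : Set H₁))
    (ρf : A → (D₁ →ₗ[ℂ] D₁)) (θf : X →ₗ[ℂ] (D₁ →ₗ[ℂ] H₁))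
    (hρf_one : ρf 1 = LinearMap.id)
    (hρf_mul : ∀ a b : A, ρf (a * b) = (ρf a) ∘ₗ (ρf b))
    (hρf_adj : ∀ (a : A) (ξ η : D₁), ⟪(η : H₁), (ρf a ξ : H₁)⟫ = ⟪(ρf (star a) η : H₁), (ξ : H₁)⟫)
    (φf : D₁) (hcyc₁ : ∀ ξ : D₁, ∃ a : A, ρf a φf = ξ)
    (hf_eq₁ : ∀ a : A, f a = ⟪(φf : H₁), (ρf a φf : H₁)⟫)
    (hF_eq₁ : ∀ (a b : A) (x : X), F (l a (r x b)) = ⟪(ρf (star a) φf : H₁), θf x (ρf b φf)⟫)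
    -- another *-representation (θ, ρ) on D₂ ⊆ H₂ with algebraically cyclic vector ψ
    {H₂ : Type*} [NormedAddCommGroup H₂] [InnerProductSpace ℂ H₂] [CompleteSpace H₂]
    (D₂ : Submodule ℂ H₂) (hD₂ : Dense (D₂ : Set H₂))
    (ρ : A → (D₂ →ₗ[ℂ] D₂)) (θ : X →ₗ[ℂ] (D₂ →ₗ[ℂ] H₂))
    (hρ_one : ρ 1 = LinearMap.id)
    (hρ_mul : ∀ a b : A, ρ (a * b) = (ρ a) ∘ₗ (ρ b))
    (hρ_adj : ∀ (a : A) (ξ η : D₂), ⟪(η : H₂), (ρ a ξ : H₂)⟫ = ⟪(ρ (star a) η : H₂), (ξ : H₂)⟫)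
    (ψ : D₂) (hcyc₂ : ∀ ξ : D₂, ∃ a : A, ρ a ψ = ξ)
    (hf_eq₂ : ∀ a : A, f a = ⟪(ψ : H₂), (ρ a ψ : H₂)⟫)
    (hF_eq₂ : ∀ (a b : A) (x : X), F (l a (r x b)) = ⟪(ρ (star a) ψ : H₂), θ x (ρ b ψ)⟫) :
    ∃ U : H₁ ≃ₗᵢ[ℂ] H₂,
      U (φf : H₁) = (ψ : H₂) ∧
      U '' (D₁ : Set H₁) = (D₂ : Set H₂) ∧
      (∀ (a : A) (η : D₁) (η' : D₂), U (η : H₁) = (η' : H₂) →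
        U (ρf a η : H₁) = (ρ a η' : H₂)) ∧
      (∀ (x : X) (η : D₁) (η' : D₂), U (η : H₁) = (η' : H₂) →
        U (θf x η) = θ x η') := by
  set g₁ : A → H₁ := fun a => ρf a φf
  set g₂ : A → H₂ := fun a => ρ a ψ
  have range₁ : Set.range g₁ = D₁ :=
    (Function.Surjective.range_comp hcyc₁ _).trans Subtype.range_coe
  have range₂ : Set.range g₂ = D₂ :=
    (Function.Surjective.range_comp hcyc₂ _).trans Subtype.range_coe
  have hgram : gram ℂ g₁ = gram ℂ g₂ := by
    ext a b
    rw [gram_apply, gram_apply, inner_apply_apply_eq_inner_mul hρf_mul hρf_adj,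
      inner_apply_apply_eq_inner_mul hρ_mul hρ_adj, ← hf_eq₁, ← hf_eq₂]
  have dense₂ : DenseRange g₂ := by rwa [DenseRange, range₂]
  obtain ⟨U, hU⟩ := exists_linearIsometryEquiv_apply_eq_of_gram_eq hgram
    (by rwa [range₁, span_eq]) (by rwa [range₂, span_eq])
  have hU_D₁ : ∀ (η : D₁) (η' : D₂), U η = η' → ∃ b, η = ρf b φf ∧ η' = ρ b ψ := by
    intro η η' h
    obtain ⟨b, rfl⟩ := hcyc₁ η
    exact ⟨b, rfl, Subtype.ext (h.symm.trans (hU b))⟩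
  refine ⟨U, by simpa [g₁, g₂, hρf_one, hρ_one] using hU 1, ?_, ?_, ?_⟩
  · rw [← range₁, ← range₂, ← Set.range_comp]
    exact congrArg Set.range (funext hU)
  · intro a η η' h
    obtain ⟨b, rfl, rfl⟩ := hU_D₁ η η' h
    simpa [g₁, g₂, hρf_mul, hρ_mul] using hU (a * b)
  · intro x η η' h
    obtain ⟨b, rfl, rfl⟩ := hU_D₁ η η' h
    refine U.apply_eq_of_inner_eq hU dense₂ fun c => ?_
    rw [← star_star c, ← hF_eq₁, hF_eq₂]

/-- uniqueness in the GNS-like theorem: if `(θf, ρf)` (with cyclic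
vector `φf`) and `(θ, ρ)` (with algebraically cyclic vector `ψ`) are two
`*`-representations of the `*`-bimodule `X` reproducing the same functionals
`f` on `A` and `F` on `X`, then there is a unitary `U` of the Hilbert space
completion `H₁` onto `H₂` with `Uφf = ψ`, `U D₁ = D₂`, `ρ(a) = U ρf(a) U⁻¹`
and `θ(x) = U θf(x) U⁻¹`.
(The paper's inner product `⟨u,v⟩`, linear in `u`, is written as Mathlib's `⟪v, u⟫`.) -/
theorem gns_like_uniqueness
    {A X : Type*} [Ring A] [Algebra ℂ A] [StarRing A] [StarModule ℂ A]
    [AddCommGroup X] [Module ℂ X]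
    (s : X → X)
    (hs_invol : ∀ x : X, s (s x) = x)
    (l : A → X → X) (r : X → A → X)
    (hl_one : ∀ x, l 1 x = x) (hl_mul : ∀ a b x, l a (l b x) = l (a * b) x)
    (hr_one : ∀ x, r x 1 = x) (hr_mul : ∀ a b x, r (r x a) b = r x (a * b))
    (h_comm : ∀ a b x, r (l a x) b = l a (r x b))
    (h_star : ∀ (a b : A) (x : X), s (l a (r x b)) = l (star b) (r (s x) (star a)))
    (F : X →ₗ[ℂ] ℂ) (hF_her : ∀ x : X, F (s x) = (starRingEnd ℂ) (F x))
    (f : A →ₗ[ℂ] ℂ) (hf_pos : ∀ a : A, 0 ≤ (f (star a * a)).re ∧ (f (star a * a)).im = 0)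
    (h_dom : ∀ x : X, ∃ C : ℝ, 0 < C ∧
      ∀ a : A, ‖F (l (star a) x)‖ ^ 2 ≤ C * (f (star a * a)).re)
    -- the GNS-like representation (θf, ρf) on D₁ ⊆ H₁ with cyclic vector φf
    {H₁ : Type*} [NormedAddCommGroup H₁] [InnerProductSpace ℂ H₁] [CompleteSpace H₁]
    (D₁ : Submodule ℂ H₁) (hD₁ : Dense (D₁ : Set H₁))
    (ρf : A → (D₁ →ₗ[ℂ] D₁)) (θf : X →ₗ[ℂ] (D₁ →ₗ[ℂ] H₁))
    (hρf_one : ρf 1 = LinearMap.id)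
    (hρf_mul : ∀ a b : A, ρf (a * b) = (ρf a) ∘ₗ (ρf b))
    (hρf_adj : ∀ (a : A) (ξ η : D₁), ⟪(η : H₁), (ρf a ξ : H₁)⟫ = ⟪(ρf (star a) η : H₁), (ξ : H₁)⟫)
    (hθf_star : ∀ (x : X) (ξ η : D₁), ⟪(η : H₁), θf (s x) ξ⟫ = ⟪θf x η, (ξ : H₁)⟫)
    (hrepf : ∀ (a b : A) (x : X) (ξ η : D₁),
      ⟪(η : H₁), θf (l a (r x b)) ξ⟫ = ⟪(ρf (star a) η : H₁), θf x (ρf b ξ)⟫)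
    (φf : D₁) (hcyc₁ : ∀ ξ : D₁, ∃ a : A, ρf a φf = ξ)
    (hf_eq₁ : ∀ a : A, f a = ⟪(φf : H₁), (ρf a φf : H₁)⟫)
    (hF_eq₁ : ∀ (a b : A) (x : X), F (l a (r x b)) = ⟪(ρf (star a) φf : H₁), θf x (ρf b φf)⟫)
    -- another *-representation (θ, ρ) on D₂ ⊆ H₂ with algebraically cyclic vector ψ
    {H₂ : Type*} [NormedAddCommGroup H₂] [InnerProductSpace ℂ H₂] [CompleteSpace H₂]
    (D₂ : Submodule ℂ H₂) (hD₂ : Dense (D₂ : Set H₂))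
    (ρ : A → (D₂ →ₗ[ℂ] D₂)) (θ : X →ₗ[ℂ] (D₂ →ₗ[ℂ] H₂))
    (hρ_one : ρ 1 = LinearMap.id)
    (hρ_mul : ∀ a b : A, ρ (a * b) = (ρ a) ∘ₗ (ρ b))
    (hρ_adj : ∀ (a : A) (ξ η : D₂), ⟪(η : H₂), (ρ a ξ : H₂)⟫ = ⟪(ρ (star a) η : H₂), (ξ : H₂)⟫)
    (hθ_star : ∀ (x : X) (ξ η : D₂), ⟪(η : H₂), θ (s x) ξ⟫ = ⟪θ x η, (ξ : H₂)⟫)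
    (hrep : ∀ (a b : A) (x : X) (ξ η : D₂),
      ⟪(η : H₂), θ (l a (r x b)) ξ⟫ = ⟪(ρ (star a) η : H₂), θ x (ρ b ξ)⟫)
    (ψ : D₂) (hcyc₂ : ∀ ξ : D₂, ∃ a : A, ρ a ψ = ξ)
    (hf_eq₂ : ∀ a : A, f a = ⟪(ψ : H₂), (ρ a ψ : H₂)⟫)
    (hF_eq₂ : ∀ (a b : A) (x : X), F (l a (r x b)) = ⟪(ρ (star a) ψ : H₂), θ x (ρ b ψ)⟫) :
    ∃ U : H₁ ≃ₗᵢ[ℂ] H₂,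
      U (φf : H₁) = (ψ : H₂) ∧
      U '' (D₁ : Set H₁) = (D₂ : Set H₂) ∧
      (∀ (a : A) (η : D₁) (η' : D₂), U (η : H₁) = (η' : H₂) →
        U (ρf a η : H₁) = (ρ a η' : H₂)) ∧
      (∀ (x : X) (η : D₁) (η' : D₂), U (η : H₁) = (η' : H₂) →
        U (θf x η) = θ x η') :=
  gns_like_uniqueness_general l r F f D₁ hD₁ ρf θf hρf_one hρf_mul hρf_adj φf hcyc₁ hf_eq₁ hF_eq₁ D₂
    hD₂ ρ θ hρ_one hρ_mul hρ_adj ψ hcyc₂ hf_eq₂ hF_eq₂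
end

section
/- In the setting of the GNS-like theorem (F hermitian on the *-bimodule X, f positive on A with |F(a⁺·x)|² ≤ C_x f(a⁺a), and (θ_F,ρ_f) the resulting representation), for x ∈ X the operator θ_F(x) is bounded on D_f if and only if there exists λ > 0 such that |F(a⁺·x·a)| ≤ λ f(a⁺a) for all a ∈ A. -/
open scoped ComplexInnerProductSpace

/-!
Since `F(a⁺·x·a) = ⟪ρ_f(a)φ_f, θ_F(x) ρ_f(a)φ_f⟫`, `f(a⁺a) = ‖ρ_f(a)φ_f‖²` and `φ_f` is cyclic,
the condition on `F` says exactly that the sesquilinear form `(ξ, η) ↦ ⟪ξ, θ_F(x) η⟫` on `D_f`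
is bounded by `λ` on the diagonal. By polarization and the parallelogram law it is then bounded
by `2λ` everywhere, and density of `D_f` turns this into `‖θ_F(x) η‖ ≤ 2λ ‖η‖`.
-/

namespace LinearMap

theorem sesq_polarization {E : Type*} [AddCommGroup E] [Module ℂ E]
    (b : E →ₗ⋆[ℂ] E →ₗ[ℂ] ℂ) (ξ η : E) :
    b ξ η = (b (ξ + η) (ξ + η) - b (ξ - η) (ξ - η) - Complex.I * b (ξ + Complex.I • η)
      (ξ + Complex.I • η) + Complex.I * b (ξ - Complex.I • η) (ξ - Complex.I • η)) / 4 := by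
  simp only [map_add, map_sub, map_smulₛₗ, add_apply, sub_apply, smul_apply, smul_eq_mul,
    RingHom.id_apply, Complex.conj_I]
  ring_nf
  rw [Complex.I_sq]
  ring

variable {E : Type*} [NormedAddCommGroup E] [InnerProductSpace ℂ E]

theorem norm_sesq_le_of_norm_sesq_self_le (b : E →ₗ⋆[ℂ] E →ₗ[ℂ] ℂ) {M : ℝ}
    (h : ∀ η, ‖b η η‖ ≤ M * ‖η‖ ^ 2) (ξ η : E) :
    ‖b ξ η‖ ≤ M * (‖ξ‖ ^ 2 + ‖η‖ ^ 2) := by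
  have hIη : ‖Complex.I • η‖ = ‖η‖ := by rw [norm_smul, Complex.norm_I, one_mul]
  have hpar := parallelogram_law_with_norm ℂ ξ η
  have hparI := parallelogram_law_with_norm ℂ ξ (Complex.I • η)
  rw [hIη] at hparI
  calc ‖b ξ η‖
      ≤ (‖b (ξ + η) (ξ + η)‖ + ‖b (ξ - η) (ξ - η)‖ + ‖b (ξ + Complex.I • η) (ξ + Complex.I • η)‖
          + ‖b (ξ - Complex.I • η) (ξ - Complex.I • η)‖) / 4 := by
        rw [sesq_polarization b ξ η, norm_div, Complex.norm_ofNat]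
        gcongr
        refine (norm_add_le _ _).trans ?_
        refine add_le_add ((norm_sub_le _ _).trans (add_le_add (norm_sub_le _ _) ?_)) ?_ <;>
          simp
    _ ≤ (M * ‖ξ + η‖ ^ 2 + M * ‖ξ - η‖ ^ 2 + M * ‖ξ + Complex.I • η‖ ^ 2
          + M * ‖ξ - Complex.I • η‖ ^ 2) / 4 := by gcongr <;> exact h _
    _ = M * (‖ξ‖ ^ 2 + ‖η‖ ^ 2) := by linear_combination (M / 4) * (hpar + hparI)

theorem norm_sesq_le_two_mul_of_norm_sesq_self_le (b : E →ₗ⋆[ℂ] E →ₗ[ℂ] ℂ) {M : ℝ}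
    (h : ∀ η, ‖b η η‖ ≤ M * ‖η‖ ^ 2) (ξ η : E) :
    ‖b ξ η‖ ≤ 2 * M * ‖ξ‖ * ‖η‖ := by
  rcases eq_or_ne ξ 0 with rfl | hξ
  · simp
  rcases eq_or_ne η 0 with rfl | hη
  · simp
  have hξη : 0 < ‖ξ‖ * ‖η‖ := by positivity
  -- `‖η‖ • ξ` and `‖ξ‖ • η` both have norm `‖ξ‖ ‖η‖`, so the previous bound becomes `2 M ‖ξ‖² ‖η‖²`
  have hscaled := norm_sesq_le_of_norm_sesq_self_le b h ((‖η‖ : ℂ) • ξ) ((‖ξ‖ : ℂ) • η)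
  simp only [map_smulₛₗ, LinearMap.smul_apply, smul_eq_mul, Complex.conj_ofReal,
    RingHom.id_apply, norm_mul, norm_smul, Complex.norm_real, Real.norm_eq_abs, abs_norm] at hscaled
  refine le_of_mul_le_mul_left ?_ hξη
  linear_combination hscaled

end LinearMap

theorem Submodule.norm_le_of_norm_inner_le {H : Type*} [NormedAddCommGroup H]
    [InnerProductSpace ℂ H] {D : Submodule ℂ H} (hD : Dense (D : Set H)) (T : D →ₗ[ℂ] H)
    {K : ℝ} (hK : 0 ≤ K) (h : ∀ ξ η : D, ‖⟪(ξ : H), T η⟫‖ ≤ K * ‖ξ‖ * ‖η‖) (η : D) :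
    ‖T η‖ ≤ K * ‖η‖ := by
  have hself : ‖⟪T η, T η⟫‖ ≤ K * ‖T η‖ * ‖η‖ :=
    hD.induction (P := fun v => ‖⟪v, T η⟫‖ ≤ K * ‖v‖ * ‖η‖) (fun v hv => h ⟨v, hv⟩ η)
      (isClosed_le (by fun_prop) (by fun_prop)) (T η)
  rw [← inner_self_re_eq_norm, inner_self_eq_norm_mul_norm] at hself
  rcases (norm_nonneg (T η)).eq_or_lt with h0 | hpos
  · rw [← h0]; positivity
  · exact le_of_mul_le_mul_left (by linarith) hpos

theorem gns_like_bounded_iff_general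
    {A X : Type*} [Ring A] [Algebra ℂ A] [StarRing A]
    [AddCommGroup X] [Module ℂ X]
    (l : A → X → X) (r : X → A → X)
    (F : X →ₗ[ℂ] ℂ)
    (f : A →ₗ[ℂ] ℂ)
    -- the resulting GNS-like representation (θF, ρf) on D_f with cyclic vector φf
    {H : Type*} [NormedAddCommGroup H] [InnerProductSpace ℂ H]
    (Df : Submodule ℂ H) (hDf : Dense (Df : Set H))
    (ρf : A → (Df →ₗ[ℂ] Df)) (θF : X →ₗ[ℂ] (Df →ₗ[ℂ] H))
    (hρf_mul : ∀ a b : A, ρf (a * b) = (ρf a) ∘ₗ (ρf b))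
    (hρf_adj : ∀ (a : A) (ξ η : Df), ⟪(η : H), (ρf a ξ : H)⟫ = ⟪(ρf (star a) η : H), (ξ : H)⟫)
    (φf : Df) (hcyc : ∀ ξ : Df, ∃ a : A, ρf a φf = ξ)
    (hf_eq : ∀ a : A, f a = ⟪(φf : H), (ρf a φf : H)⟫)
    (hF_eq : ∀ (a b : A) (x : X), F (l a (r x b)) = ⟪(ρf (star a) φf : H), θF x (ρf b φf)⟫)
    (x : X) :
    (∃ c : ℝ, 0 ≤ c ∧ ∀ η : Df, ‖θF x η‖ ≤ c * ‖η‖) ↔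
      (∃ lam : ℝ, 0 < lam ∧
        ∀ a : A, ‖F (l (star a) (r x a))‖ ≤ lam * (f (star a * a)).re) := by
  have hF_diag (a : A) : F (l (star a) (r x a)) = ⟪(ρf a φf : H), θF x (ρf a φf)⟫ := by
    rw [hF_eq, star_star]
  have hf_diag (a : A) : (f (star a * a)).re = ‖ρf a φf‖ ^ 2 := by
    rw [hf_eq, hρf_mul, LinearMap.comp_apply, hρf_adj, star_star, inner_self_eq_norm_sq_to_K]
    norm_cast
  constructor
  · rintro ⟨c, hc, hθ⟩
    refine ⟨c + 1, by linarith, fun a => ?_⟩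
    rw [hF_diag, hf_diag]
    calc ‖⟪(ρf a φf : H), θF x (ρf a φf)⟫‖
        ≤ ‖ρf a φf‖ * ‖θF x (ρf a φf)‖ := norm_inner_le_norm _ _
      _ ≤ ‖ρf a φf‖ * (c * ‖ρf a φf‖) := by gcongr; exact hθ _
      _ ≤ (c + 1) * ‖ρf a φf‖ ^ 2 := by linear_combination sq_nonneg ‖ρf a φf‖
  · rintro ⟨lam, hlam, hF⟩
    have hdiag (η : Df) : ‖⟪(η : H), θF x η⟫‖ ≤ lam * ‖η‖ ^ 2 := by
      obtain ⟨a, rfl⟩ := hcyc η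
      simpa only [hF_diag, hf_diag] using hF a
    refine ⟨2 * lam, by positivity, Df.norm_le_of_norm_inner_le hDf (θF x) (by positivity) ?_⟩
    exact LinearMap.norm_sesq_le_two_mul_of_norm_sesq_self_le
      (((innerₛₗ ℂ).comp Df.subtype).compl₂ (θF x)) hdiag

/-- In the setting of the GNS-like theorem, for `x ∈ X` the operator
`θ_F(x)` is bounded on the GNS domain `D_f` if and only if there exists `λ > 0`
such that `|F(a⁺·x·a)| ≤ λ f(a⁺a)` for all `a ∈ A`.
(The paper's inner product `⟨u,v⟩`, linear in `u`, is written as Mathlib's `⟪v, u⟫`.) -/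
theorem gns_like_bounded_iff
    {A X : Type*} [Ring A] [Algebra ℂ A] [StarRing A] [StarModule ℂ A]
    [AddCommGroup X] [Module ℂ X]
    (s : X → X)
    (hs_invol : ∀ x : X, s (s x) = x)
    (l : A → X → X) (r : X → A → X)
    (hl_one : ∀ x, l 1 x = x) (hl_mul : ∀ a b x, l a (l b x) = l (a * b) x)
    (hr_one : ∀ x, r x 1 = x) (hr_mul : ∀ a b x, r (r x a) b = r x (a * b))
    (h_comm : ∀ a b x, r (l a x) b = l a (r x b))
    (h_star : ∀ (a b : A) (x : X), s (l a (r x b)) = l (star b) (r (s x) (star a)))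
    -- F hermitian, f positive, and the domination condition of the GNS-like theorem
    (F : X →ₗ[ℂ] ℂ) (hF_her : ∀ x : X, F (s x) = (starRingEnd ℂ) (F x))
    (f : A →ₗ[ℂ] ℂ) (hf_pos : ∀ a : A, 0 ≤ (f (star a * a)).re ∧ (f (star a * a)).im = 0)
    (h_dom : ∀ x : X, ∃ C : ℝ, 0 < C ∧
      ∀ a : A, ‖F (l (star a) x)‖ ^ 2 ≤ C * (f (star a * a)).re)
    -- the resulting GNS-like representation (θF, ρf) on D_f with cyclic vector φf
    {H : Type*} [NormedAddCommGroup H] [InnerProductSpace ℂ H] [CompleteSpace H]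
    (Df : Submodule ℂ H) (hDf : Dense (Df : Set H))
    (ρf : A → (Df →ₗ[ℂ] Df)) (θF : X →ₗ[ℂ] (Df →ₗ[ℂ] H))
    (hρf_one : ρf 1 = LinearMap.id)
    (hρf_mul : ∀ a b : A, ρf (a * b) = (ρf a) ∘ₗ (ρf b))
    (hρf_adj : ∀ (a : A) (ξ η : Df), ⟪(η : H), (ρf a ξ : H)⟫ = ⟪(ρf (star a) η : H), (ξ : H)⟫)
    (hθF_star : ∀ (x : X) (ξ η : Df), ⟪(η : H), θF (s x) ξ⟫ = ⟪θF x η, (ξ : H)⟫)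
    (hrep : ∀ (a b : A) (x : X) (ξ η : Df),
      ⟪(η : H), θF (l a (r x b)) ξ⟫ = ⟪(ρf (star a) η : H), θF x (ρf b ξ)⟫)
    (φf : Df) (hcyc : ∀ ξ : Df, ∃ a : A, ρf a φf = ξ)
    (hf_eq : ∀ a : A, f a = ⟪(φf : H), (ρf a φf : H)⟫)
    (hF_eq : ∀ (a b : A) (x : X), F (l a (r x b)) = ⟪(ρf (star a) φf : H), θF x (ρf b φf)⟫)
    (x : X) :
    (∃ c : ℝ, 0 ≤ c ∧ ∀ η : Df, ‖θF x η‖ ≤ c * ‖η‖) ↔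
      (∃ lam : ℝ, 0 < lam ∧
        ∀ a : A, ‖F (l (star a) (r x a))‖ ≤ lam * (f (star a * a)).re) :=
  gns_like_bounded_iff_general l r F f Df hDf ρf θF hρf_mul hρf_adj φf hcyc hf_eq hF_eq x
end
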